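/- Let λ, β and w be real constants with λ ≠ β, -1 < w < 1 and 3(1-w²) + 2β(β-λ) ≥ 0, and consider the coupled quintessence system x' = (1/2)[3(1-w)x³ - 3x(w(y²-1)+y²+1) + √6 λy²] + √(3/2)·β·(1-x²-y²), y' = -(3/2)y[(w-1)x² + (w+1)(y²-1) + √(2/3)λx]. Then the point B with coordinates x_B = √(3/2)(1+w)/(λ-β) and y_B = √(3(1-w²) + 2β(β-λ)) / (√2·|λ-β|) is a zero of the vector field, and the effective equation of state w_eff = x² - y² + w(1-x²-y²) evaluated at B equals (wλ + β)/(λ - β). In particular, for suitable λ and β this scaling critical point describes an accelerating universe (w_eff < -1/3) with 0 < Ω_φ = x_B² + y_B² < 1. -/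

import Mathlib

/-- `x`-component of the coupled quintessence vector field (coupling `Q = βκρφ̇`). -/
noncomputable def c14x (w lam β x y : ℝ) : ℝ :=
  1 / 2 * (3 * (1 - w) * x ^ 3 - 3 * x * (w * (y ^ 2 - 1) + y ^ 2 + 1)
      + Real.sqrt 6 * lam * y ^ 2)
    + Real.sqrt (3 / 2) * β * (1 - x ^ 2 - y ^ 2)

/-- `y`-component of the coupled quintessence vector field. -/
noncomputable def c14y (w lam x y : ℝ) : ℝ :=
  -(3 / 2) * y * ((w - 1) * x ^ 2 + (w + 1) * (y ^ 2 - 1) + Real.sqrt (2 / 3) * lam * x)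

/-- `x`-coordinate of the coupled scaling point `B`. -/
noncomputable def x14 (w lam β : ℝ) : ℝ := Real.sqrt (3 / 2) * (1 + w) / (lam - β)

/-- `y`-coordinate of the coupled scaling point `B`. -/
noncomputable def y14 (w lam β : ℝ) : ℝ :=
  Real.sqrt (3 * (1 - w ^ 2) + 2 * β * (β - lam)) / (Real.sqrt 2 * |lam - β|)

/-! At `B` the bracket of `y'` vanishes. Since `x_B` is `√(3/2)` times a rational function of
`w, λ, β` while `x_B²` and `y_B²` are rational, both fixed-point equations and `w_eff` reduce
to rational identities once `√6 = 2√(3/2)` and `√(2/3) √(3/2) = 1`. The accelerating example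
takes `λ = (3w+5)/4`, `β = -(21w+19)/4`, for which `λ - β = 6(1+w)`, `w_eff = (3w-19)/24`
and `Ω_φ = 7/8`. -/

lemma sqrt_six_eq_two_mul_sqrt_three_halves : √6 = 2 * √(3 / 2) := by
  rw [show (6 : ℝ) = 2 ^ 2 * (3 / 2) by norm_num, Real.sqrt_mul (by positivity),
    Real.sqrt_sq zero_le_two]

lemma sqrt_two_thirds_mul_sqrt_three_halves : √(2 / 3) * √(3 / 2) = 1 := by
  rw [← Real.sqrt_mul (by norm_num)]
  norm_num

lemma x14_sq (w lam β : ℝ) : x14 w lam β ^ 2 = 3 * (1 + w) ^ 2 / (2 * (lam - β) ^ 2) := by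
  rw [x14, div_pow, mul_pow, Real.sq_sqrt (by norm_num), ← div_div]
  ring

lemma sqrt_two_thirds_mul_x14 (w lam β : ℝ) :
    √(2 / 3) * x14 w lam β = (1 + w) / (lam - β) := by
  rw [x14, mul_div_assoc', ← mul_assoc, sqrt_two_thirds_mul_sqrt_three_halves, one_mul]

lemma y14_sq {w lam β : ℝ} (hy : 0 ≤ 3 * (1 - w ^ 2) + 2 * β * (β - lam)) :
    y14 w lam β ^ 2 = (3 * (1 - w ^ 2) + 2 * β * (β - lam)) / (2 * (lam - β) ^ 2) := by
  rw [y14, div_pow, mul_pow, Real.sq_sqrt hy, Real.sq_sqrt zero_le_two, sq_abs]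

section ScalingPoint

variable {w lam β : ℝ} (hlb : lam ≠ β) (hy : 0 ≤ 3 * (1 - w ^ 2) + 2 * β * (β - lam))
include hlb hy

lemma c14x_x14_y14 : c14x w lam β (x14 w lam β) (y14 w lam β) = 0 := by
  have hD : lam - β ≠ 0 := sub_ne_zero.mpr hlb
  rw [c14x, pow_succ, x14_sq, y14_sq hy, sqrt_six_eq_two_mul_sqrt_three_halves, x14]
  field_simp
  ring

lemma c14y_x14_y14 : c14y w lam (x14 w lam β) (y14 w lam β) = 0 := by
  have hD : lam - β ≠ 0 := sub_ne_zero.mpr hlb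
  have hbracket : (w - 1) * x14 w lam β ^ 2 + (w + 1) * (y14 w lam β ^ 2 - 1)
      + √(2 / 3) * lam * x14 w lam β = 0 := by
    rw [mul_right_comm _ lam, sqrt_two_thirds_mul_x14, x14_sq, y14_sq hy]
    field_simp
    ring
  rw [c14y, hbracket, mul_zero]

lemma weff_x14_y14 :
    x14 w lam β ^ 2 - y14 w lam β ^ 2 + w * (1 - x14 w lam β ^ 2 - y14 w lam β ^ 2)
      = (w * lam + β) / (lam - β) := by
  have hD : lam - β ≠ 0 := sub_ne_zero.mpr hlb
  rw [x14_sq, y14_sq hy]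
  field_simp
  ring

lemma omega_x14_y14 :
    x14 w lam β ^ 2 + y14 w lam β ^ 2 = (3 * (1 + w) + β * (β - lam)) / (lam - β) ^ 2 := by
  have hD : lam - β ≠ 0 := sub_ne_zero.mpr hlb
  rw [x14_sq, y14_sq hy]
  field_simp
  ring

end ScalingPoint

lemma exists_accelerating_scaling_point {w : ℝ} (hw1 : -1 < w) (hw2 : w < 1) :
    ∃ lam β : ℝ, lam ≠ β ∧ 0 ≤ 3 * (1 - w ^ 2) + 2 * β * (β - lam) ∧
      (w * lam + β) / (lam - β) < -(1 / 3) ∧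
      0 < x14 w lam β ^ 2 + y14 w lam β ^ 2 ∧ x14 w lam β ^ 2 + y14 w lam β ^ 2 < 1 := by
  have hw : 1 + w ≠ 0 := by linarith
  have hD : (3 * w + 5) / 4 - -(21 * w + 19) / 4 = 6 * (1 + w) := by ring
  have hne : (3 * w + 5) / 4 ≠ -(21 * w + 19) / 4 := by
    rw [← sub_ne_zero, hD]
    positivity
  have hy : 0 ≤ 3 * (1 - w ^ 2)
      + 2 * (-(21 * w + 19) / 4) * (-(21 * w + 19) / 4 - (3 * w + 5) / 4) := by
    nlinarith [sq_nonneg (1 + w)]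
  have hweff : (w * ((3 * w + 5) / 4) + -(21 * w + 19) / 4)
      / ((3 * w + 5) / 4 - -(21 * w + 19) / 4) = (3 * w - 19) / 24 := by
    rw [hD]
    field_simp
    ring
  have homega : x14 w ((3 * w + 5) / 4) (-(21 * w + 19) / 4) ^ 2
      + y14 w ((3 * w + 5) / 4) (-(21 * w + 19) / 4) ^ 2 = 7 / 8 := by
    rw [omega_x14_y14 hne hy, hD]
    field_simp
    ring
  refine ⟨_, _, hne, hy, ?_, ?_, ?_⟩
  · rw [hweff]
    linarith
  all_goals rw [homega]; norm_num

/-- Coupled quintessence with exponential potential and coupling `Q = βκρφ̇`: the point `B`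
is a fixed point with effective equation of state `w_eff = (wλ+β)/(λ-β)`; in particular for
suitable `λ` and `β` this scaling critical point describes an accelerating universe
(`w_eff < -1/3`) with `0 < Ω_φ < 1`. -/
theorem coupled_quintessence_scaling_point (w lam β : ℝ) (hw1 : -1 < w) (hw2 : w < 1)
    (hlb : lam ≠ β) (hy : 0 ≤ 3 * (1 - w ^ 2) + 2 * β * (β - lam)) :
    c14x w lam β (x14 w lam β) (y14 w lam β) = 0 ∧
    c14y w lam (x14 w lam β) (y14 w lam β) = 0 ∧
    (x14 w lam β) ^ 2 - (y14 w lam β) ^ 2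
        + w * (1 - (x14 w lam β) ^ 2 - (y14 w lam β) ^ 2) = (w * lam + β) / (lam - β) ∧
    (∃ lam' β' : ℝ, lam' ≠ β' ∧ 0 ≤ 3 * (1 - w ^ 2) + 2 * β' * (β' - lam') ∧
      (w * lam' + β') / (lam' - β') < -(1 / 3) ∧
      0 < (x14 w lam' β') ^ 2 + (y14 w lam' β') ^ 2 ∧
      (x14 w lam' β') ^ 2 + (y14 w lam' β') ^ 2 < 1) :=
  ⟨c14x_x14_y14 hlb hy, c14y_x14_y14 hlb hy, weff_x14_y14 hlb hy,
    exists_accelerating_scaling_point hw1 hw2⟩
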